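/- Let n be a positive natural number and set h = F_{6n-1} and k = F_{6n+1}, where F_m is the m-th Fibonacci number. Then s₅(h,k) + s₅(k,h) = (1/2)·(h/k + k/h - 2). -/

import Mathlib

/-
For odd coprime `h, k` the parity of `j + ⌊hj/k⌋` is that of the residue `hj mod k`, so
`s₅(h,k) = A(h,k)/k` with `A(h,k) = ∑_{0<j<k} (-1)^(hj mod k) j`. Writing
`hj = k⌊hj/k⌋ + (hj mod k)` and expanding `(-1)^q q = ∑_{0<i≤q} (-1)^i (2i-1)`, swapping the
order of summation over the lattice points under the line `y = hx/k` yields the reciprocity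
`h A(h,k) + k A(k,h) = (hk-1)/2`, that is `s₅(h,k) + s₅(k,h) = (hk-1)/(2hk)`.
For `h = F_{6n-1}`, `k = F_{6n+1}` Cassini's identity gives `hk - 1 = F_{6n}² = (k-h)²`, and
`F_{6n}` is even, which forces `h` and `k` to be odd and coprime.
-/

/-- The sawtooth function `((x))`: equals `x - ⌊x⌋ - 1/2` if `x` is not an integer,
and `0` if `x` is an integer. -/
def saw (x : ℚ) : ℚ := if x = (⌊x⌋ : ℚ) then 0 else x - ⌊x⌋ - 1/2

/-- The Hardy sum `s₅(h,k) = Σ_{j=1}^{k} (-1)^{j+⌊hj/k⌋}·((j/k))`. -/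
noncomputable def s5 (h k : ℤ) : ℚ :=
  ∑ j ∈ Finset.Icc (1 : ℤ) k,
    (-1 : ℚ) ^ (j + ⌊((h * j : ℤ) : ℚ) / (k : ℚ)⌋) * saw ((j : ℚ) / (k : ℚ))

open Finset

section NegOnePow

variable {K : Type*} [DivisionRing K]

lemma neg_one_zpow_add (a b : ℤ) : (-1 : K) ^ (a + b) = (-1) ^ a * (-1) ^ b :=
  zpow_add₀ (neg_ne_zero.2 one_ne_zero) a b

lemma neg_one_zpow_eq_of_even_sub {a b : ℤ} (hab : Even (a - b)) : (-1 : K) ^ a = (-1) ^ b := by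
  rw [← Int.cast_negOnePow, ← Int.cast_negOnePow, (Int.negOnePow_eq_iff a b).2 hab]

lemma neg_one_zpow_mul_emod {h k : ℤ} (hh : Odd h) (hk : Odd k) (j : ℤ) :
    (-1 : K) ^ (h * j % k) = (-1) ^ j * (-1) ^ (h * j / k) := by
  rw [← neg_one_zpow_add]
  apply neg_one_zpow_eq_of_even_sub
  have hdiff : h * j % k - (j + h * j / k) = (h - 1) * j - (k + 1) * (h * j / k) := by
    rw [Int.emod_def]; ring
  rw [hdiff]
  exact ((hh.sub_odd odd_one).mul_right j).sub ((hk.add_odd odd_one).mul_right _)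

end NegOnePow

lemma Int.sum_Ioc_succ_top {M : Type*} [AddCommMonoid M] (f : ℤ → M) {a b : ℤ}
    (hab : a ≤ b) : ∑ j ∈ Ioc a (b + 1), f j = ∑ j ∈ Ioc a b, f j + f (b + 1) := by
  rw [← insert_Ioc_right_eq_Ioc_add_one hab, sum_insert (by simp), add_comm]

lemma sum_Ioc_neg_one_zpow {a b : ℤ} (hab : a ≤ b) :
    ∑ r ∈ Ioc a b, (-1 : ℚ) ^ r = ((-1) ^ b - (-1) ^ a) / 2 := by
  induction b, hab using Int.leInduction with
  | base => simp
  | succ b hab ih =>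
    rw [Int.sum_Ioc_succ_top _ hab, ih, neg_one_zpow_add]
    ring

lemma sum_Ioc_neg_one_zpow_mul_self {m : ℤ} (hm : 0 ≤ m) :
    ∑ r ∈ Ioc 0 m, (-1 : ℚ) ^ r * r = ((-1) ^ m * (2 * m + 1) - 1) / 4 := by
  induction m, hm using Int.leInduction with
  | base => simp
  | succ m hm ih =>
    rw [Int.sum_Ioc_succ_top _ hm, ih, neg_one_zpow_add]
    push_cast
    ring

lemma sum_Ioc_neg_one_zpow_mul_two_mul_sub_one {m : ℤ} (hm : 0 ≤ m) :
    ∑ i ∈ Ioc 0 m, (-1 : ℚ) ^ i * (2 * i - 1) = (-1) ^ m * m := by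
  induction m, hm using Int.leInduction with
  | base => simp
  | succ m hm ih =>
    rw [Int.sum_Ioc_succ_top _ hm, ih, neg_one_zpow_add]
    push_cast
    ring

lemma sum_Ioo_mul_emod {M : Type*} [AddCommMonoid M] {h k : ℤ} (hcop : IsCoprime h k)
    (f : ℤ → M) : ∑ j ∈ Ioo 0 k, f (h * j % k) = ∑ r ∈ Ioo 0 k, f r := by
  have hmaps : ∀ j ∈ Ioo 0 k, h * j % k ∈ Ioo 0 k := by
    intro j hj
    rw [mem_Ioo] at hj ⊢
    refine ⟨(Int.emod_nonneg _ (by omega)).lt_of_ne fun hzero => ?_,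
      Int.emod_lt_of_pos _ (by omega)⟩
    have hkj : k ∣ j := hcop.symm.dvd_of_dvd_mul_left (Int.dvd_of_emod_eq_zero hzero.symm)
    exact absurd (Int.le_of_dvd hj.1 hkj) (by omega)
  have hinj : Set.InjOn (fun j => h * j % k) (Ioo 0 k : Set ℤ) := by
    intro i hi j hj hij
    simp only [coe_Ioo, Set.mem_Ioo] at hi hj
    have hdvd : k ∣ h * (j - i) := by
      rw [mul_sub]; exact Int.ModEq.dvd hij
    have := Int.eq_zero_of_abs_lt_dvd (hcop.symm.dvd_of_dvd_mul_left hdvd)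
      (abs_lt.2 ⟨by omega, by omega⟩)
    omega
  exact sum_nbij _ hmaps hinj (surjOn_of_injOn_of_card_le _ hmaps hinj le_rfl) fun _ _ => rfl

lemma saw_intCast (n : ℤ) : saw n = 0 := by
  simp [saw]

lemma saw_div_of_lt {j k : ℤ} (hj : 0 < j) (hjk : j < k) : saw (j / k) = j / k - 1 / 2 := by
  have hk : (0 : ℚ) < k := by exact_mod_cast hj.trans hjk
  have hfloor : ⌊(j / k : ℚ)⌋ = 0 := Int.floor_eq_zero_iff.2
    ⟨by positivity, (div_lt_one hk).2 (by exact_mod_cast hjk)⟩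
  have hne : (j / k : ℚ) ≠ 0 := by positivity
  simp [saw, hfloor, hne]

lemma Int.floor_intCast_div_intCast (a : ℤ) {b : ℤ} (hb : 0 < b) :
    ⌊(a / b : ℚ)⌋ = a / b := by
  lift b to ℕ using hb.le
  exact Rat.floor_intCast_div_natCast a b

noncomputable def altResidueSum (h k : ℤ) : ℚ :=
  ∑ j ∈ Ioo 0 k, (-1 : ℚ) ^ (h * j % k) * j

lemma sum_Ioo_neg_one_zpow_mul_emod {h k : ℤ} (hk : 0 < k) (hk_odd : Odd k)
    (hcop : IsCoprime h k) : ∑ j ∈ Ioo 0 k, (-1 : ℚ) ^ (h * j % k) = 0 := by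
  rw [sum_Ioo_mul_emod hcop (fun r => (-1 : ℚ) ^ r), ← Ioc_sub_one_right_eq_Ioo,
    sum_Ioc_neg_one_zpow (by omega), (hk_odd.sub_odd odd_one).neg_one_zpow, zpow_zero, sub_self,
    zero_div]

lemma s5_eq_altResidueSum_div {h k : ℤ} (hk : 0 < k) (hh_odd : Odd h) (hk_odd : Odd k)
    (hcop : IsCoprime h k) : s5 h k = altResidueSum h k / k := by
  have hterm : ∀ j ∈ Ioo 0 k,
      (-1 : ℚ) ^ (j + ⌊((h * j : ℤ) : ℚ) / k⌋) * saw (j / k)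
        = (-1 : ℚ) ^ (h * j % k) * j / k - (-1 : ℚ) ^ (h * j % k) / 2 := by
    intro j hj
    rw [mem_Ioo] at hj
    rw [Int.floor_intCast_div_intCast _ hk, neg_one_zpow_add,
      ← neg_one_zpow_mul_emod hh_odd hk_odd, saw_div_of_lt hj.1 hj.2]
    ring
  have hIcc : Icc 1 k = insert k (Ioo 0 k) := by
    rw [Ioo_insert_right hk]; ext; simp only [mem_Icc, mem_Ioc]; omega
  have hlast : saw ((k : ℚ) / k) = 0 := by
    rw [div_self (by positivity)]; exact_mod_cast saw_intCast 1
  rw [s5, hIcc, sum_insert right_notMem_Ioo, hlast, mul_zero, zero_add, sum_congr rfl hterm,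
    sum_sub_distrib, ← sum_div, ← sum_div, sum_Ioo_neg_one_zpow_mul_emod hk hk_odd hcop,
    zero_div, sub_zero, altResidueSum]

lemma mul_altResidueSum {h k : ℤ} (hk : 0 < k) (hk_odd : Odd k) (hcop : IsCoprime h k) :
    h * altResidueSum h k
      = k * ∑ j ∈ Ioo 0 k, (-1 : ℚ) ^ (h * j % k) * ((h * j / k : ℤ) : ℚ)
        + (k - 1) / 2 := by
  have hresidues :
      ∑ j ∈ Ioo 0 k, (-1 : ℚ) ^ (h * j % k) * ((h * j % k : ℤ) : ℚ) = (k - 1) / 2 := by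
    rw [sum_Ioo_mul_emod hcop (fun r => (-1 : ℚ) ^ r * r), ← Ioc_sub_one_right_eq_Ioo,
      sum_Ioc_neg_one_zpow_mul_self (by omega), (hk_odd.sub_odd odd_one).neg_one_zpow]
    push_cast
    ring
  rw [← hresidues, altResidueSum, mul_sum, mul_sum, ← sum_add_distrib]
  refine sum_congr rfl fun j _ => ?_
  have hdiv : ((h * j % k : ℤ) : ℚ) + k * ((h * j / k : ℤ) : ℚ) = h * j := by
    exact_mod_cast Int.emod_add_mul_ediv (h * j) k
  linear_combination (-(-1 : ℚ) ^ (h * j % k)) * hdiv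

lemma mul_ne_mul_of_isCoprime {h k : ℤ} (hcop : IsCoprime h k) {i : ℤ} (hi : 0 < i)
    (hih : i < h) (j : ℤ) : k * i ≠ h * j := fun heq =>
  absurd (Int.le_of_dvd hi (hcop.dvd_of_dvd_mul_left ⟨j, heq⟩)) (not_le.2 hih)

/-- Both sides say that `(j, i)` is a lattice point with `0 < j < k`, `0 < i < h` and
`k i < h j`; coprimality keeps such points off the line `k i = h j`. -/
lemma mem_Ioo_and_mem_Ioc_ediv_iff {h k : ℤ} (hh : 0 < h) (hk : 0 < k)
    (hcop : IsCoprime h k) (j i : ℤ) :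
    j ∈ Ioo 0 k ∧ i ∈ Ioc 0 (h * j / k) ↔
      j ∈ Ioc (k * i / h) (k - 1) ∧ i ∈ Ioo 0 h := by
  simp only [mem_Ioo, mem_Ioc, Int.le_ediv_iff_mul_le hk, Int.ediv_lt_iff_lt_mul hh]
  constructor
  · rintro ⟨⟨hj0, hjk⟩, hi0, hij⟩
    have hih : i < h := by nlinarith
    have hne := mul_ne_mul_of_isCoprime hcop hi0 hih j
    refine ⟨⟨?_, by omega⟩, hi0, hih⟩
    rw [mul_comm j h]
    exact lt_of_le_of_ne (by linarith) hne
  · rintro ⟨⟨hij, hjk⟩, hi0, hih⟩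
    have hj0 : 0 < j := by nlinarith
    exact ⟨⟨hj0, by omega⟩, hi0, by linarith⟩

lemma sum_Ioo_neg_one_zpow_mul_ediv_eq_sum_sum {h k : ℤ} (hh : 0 < h) (hk : 0 < k)
    (hh_odd : Odd h) (hk_odd : Odd k) (hcop : IsCoprime h k) :
    ∑ j ∈ Ioo 0 k, (-1 : ℚ) ^ (h * j % k) * ((h * j / k : ℤ) : ℚ)
      = ∑ i ∈ Ioo 0 h, ∑ j ∈ Ioc (k * i / h) (k - 1),
          (-1 : ℚ) ^ j * ((-1) ^ i * (2 * i - 1)) := by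
  have hexpand : ∀ j ∈ Ioo 0 k, (-1 : ℚ) ^ (h * j % k) * ((h * j / k : ℤ) : ℚ)
      = ∑ i ∈ Ioc 0 (h * j / k), (-1 : ℚ) ^ j * ((-1) ^ i * (2 * i - 1)) := by
    intro j hj
    rw [mem_Ioo] at hj
    have hq : 0 ≤ h * j / k := Int.ediv_nonneg (by nlinarith) hk.le
    rw [← mul_sum, sum_Ioc_neg_one_zpow_mul_two_mul_sub_one hq,
      neg_one_zpow_mul_emod hh_odd hk_odd, mul_assoc]
  rw [sum_congr rfl hexpand, sum_comm' (mem_Ioo_and_mem_Ioc_ediv_iff hh hk hcop)]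

lemma sum_Ioo_neg_one_zpow_mul_ediv {h k : ℤ} (hh : 0 < h) (hk : 0 < k) (hh_odd : Odd h)
    (hk_odd : Odd k) (hcop : IsCoprime h k) :
    ∑ j ∈ Ioo 0 k, (-1 : ℚ) ^ (h * j % k) * ((h * j / k : ℤ) : ℚ)
      = (h - 1) / 2 - altResidueSum k h := by
  have hinner : ∀ i ∈ Ioo 0 h,
      ∑ j ∈ Ioc (k * i / h) (k - 1), (-1 : ℚ) ^ j * ((-1) ^ i * (2 * i - 1))
        = ((-1 : ℚ) ^ i * (2 * i - 1) - (-1) ^ (k * i % h) * (2 * i - 1)) / 2 := by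
    intro i hi
    rw [mem_Ioo] at hi
    have hle : k * i / h ≤ k - 1 := by
      have : k * i / h < k := (Int.ediv_lt_iff_lt_mul hh).2 (by nlinarith)
      omega
    rw [← sum_mul, sum_Ioc_neg_one_zpow hle, (hk_odd.sub_odd odd_one).neg_one_zpow,
      neg_one_zpow_mul_emod hk_odd hh_odd]
    ring
  have hsigns : ∑ i ∈ Ioo 0 h, (-1 : ℚ) ^ i * (2 * i - 1) = h - 1 := by
    rw [← Ioc_sub_one_right_eq_Ioo, sum_Ioc_neg_one_zpow_mul_two_mul_sub_one (by omega),
      (hh_odd.sub_odd odd_one).neg_one_zpow]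
    push_cast
    ring
  have hresidues :
      ∑ i ∈ Ioo 0 h, (-1 : ℚ) ^ (k * i % h) * (2 * i - 1) = 2 * altResidueSum k h := by
    have hzero := sum_Ioo_neg_one_zpow_mul_emod hh hh_odd hcop.symm
    rw [altResidueSum, mul_sum]
    simp only [mul_sub, mul_one, sum_sub_distrib, hzero, sub_zero]
    exact sum_congr rfl fun i _ => by ring
  rw [sum_Ioo_neg_one_zpow_mul_ediv_eq_sum_sum hh hk hh_odd hk_odd hcop, sum_congr rfl hinner,
    ← sum_div, sum_sub_distrib, hsigns, hresidues]
  ring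

lemma altResidueSum_reciprocity {h k : ℤ} (hh : 0 < h) (hk : 0 < k) (hh_odd : Odd h)
    (hk_odd : Odd k) (hcop : IsCoprime h k) :
    h * altResidueSum h k + k * altResidueSum k h = (h * k - 1) / 2 := by
  rw [mul_altResidueSum hk hk_odd hcop, sum_Ioo_neg_one_zpow_mul_ediv hh hk hh_odd hk_odd hcop]
  ring

theorem s5_add_s5_of_odd {h k : ℤ} (hh : 0 < h) (hk : 0 < k) (hh_odd : Odd h) (hk_odd : Odd k)
    (hcop : IsCoprime h k) : s5 h k + s5 k h = (h * k - 1) / (2 * h * k) := by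
  have hrec := altResidueSum_reciprocity hh hk hh_odd hk_odd hcop
  rw [s5_eq_altResidueSum_div hk hh_odd hk_odd hcop,
    s5_eq_altResidueSum_div hh hk_odd hh_odd hcop.symm]
  have : (h : ℚ) ≠ 0 := by positivity
  have : (k : ℚ) ≠ 0 := by positivity
  field_simp
  linear_combination 2 * hrec

lemma s5_add_s5_of_mul_eq_sub_sq_add_one {h k : ℤ} (hh : 0 < h) (hkh : Even (k - h))
    (hcassini : h * k = (k - h) ^ 2 + 1) :
    s5 h k + s5 k h = (1 / 2) * ((h : ℚ) / k + k / h - 2) := by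
  have hk : 0 < k := by nlinarith [sq_nonneg (k - h)]
  have hodd : Odd (h * k) := hcassini ▸ (hkh.pow_of_ne_zero two_ne_zero).add_one
  obtain ⟨hh_odd, hk_odd⟩ := Int.odd_mul.1 hodd
  have hcop : IsCoprime h k := ⟨3 * k - h, -k, by linear_combination hcassini⟩
  have hcassiniQ : (h : ℚ) * k = (k - h) ^ 2 + 1 := by exact_mod_cast hcassini
  rw [s5_add_s5_of_odd hh hk hh_odd hk_odd hcop]
  have : (h : ℚ) ≠ 0 := by positivity
  have : (k : ℚ) ≠ 0 := by positivity
  field_simp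
  linear_combination hcassiniQ

lemma Nat.fib_six_mul_sub_one_mul_fib_six_mul_add_one {n : ℕ} (hn : 0 < n) :
    (fib (6 * n - 1) : ℤ) * fib (6 * n + 1) = fib (6 * n) ^ 2 + 1 := by
  have hcassini := Int.fib_succ_mul_fib_pred_sub_fib_sq (6 * n : ℕ)
  rw [show ((6 * n : ℕ) : ℤ) + 1 = (6 * n + 1 : ℕ) by push_cast; ring,
    show ((6 * n : ℕ) : ℤ) - 1 = (6 * n - 1 : ℕ) by omega, Int.natAbs_natCast,
    (by decide : Even 6).mul_right n |>.neg_one_pow] at hcassini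
  simp only [Int.fib_natCast] at hcassini
  linear_combination hcassini

theorem stmt_15 (n : ℕ) (hn : 0 < n) (h k : ℤ)
    (hdef : h = (Nat.fib (6 * n - 1) : ℤ)) (kdef : k = (Nat.fib (6 * n + 1) : ℤ)) :
    s5 h k + s5 k h = (1 / 2) * ((h : ℚ) / (k : ℚ) + (k : ℚ) / (h : ℚ) - 2) := by
  have hdiff : k - h = Nat.fib (6 * n) := by
    have := Nat.fib_add_two (n := 6 * n - 1)
    rw [show 6 * n - 1 + 2 = 6 * n + 1 by omega, show 6 * n - 1 + 1 = 6 * n by omega] at this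
    rw [hdef, kdef, this]
    push_cast
    ring
  have heven : Even (Nat.fib (6 * n)) :=
    even_iff_two_dvd.2 (Nat.fib_dvd 3 (6 * n) (Dvd.intro (2 * n) (by ring)))
  refine s5_add_s5_of_mul_eq_sub_sq_add_one ?_ ?_ ?_
  · rw [hdef]
    exact_mod_cast Nat.fib_pos.2 (by omega)
  · rw [hdiff]
    exact_mod_cast heven
  · rw [hdiff, hdef, kdef]
    exact Nat.fib_six_mul_sub_one_mul_fib_six_mul_add_one hn
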